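/- arXiv:2410.20832 — 4 statements merged into one kernel-verified Lean document; each statement's English description precedes it below -/
import Mathlib

section
/- Let n be a positive integer with n ≡ 0 (mod 15), and let G be the blowup W5^3[n/3, 2n/15, 2n/15, 2n/15, 2n/15, 2n/15] of the 3-uniform 5-wheel obtained by replacing the center u by a set of size n/3, each rim vertex v_i by a set of size 2n/15, and each edge by the corresponding complete 3-partite 3-graph. Then G is an n-vertex 3-graph which is {K4^{3-}, F5}-free, has minimum degree δ(G) = 4n²/45, and is not 3-partite. -/
open Finset

section Defs

variable {V : Type*} [DecidableEq V]

/-- The degree of a vertex `v` in the 3-graph `H`: the number of edges containing `v`. -/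
def degH (H : Finset (Finset V)) (v : V) : ℕ :=
  (H.filter fun e => v ∈ e).card

/-- `H` contains a copy of the generalized triangle `F₅ = {abc, abd, cde}`. -/
def HasF5 (H : Finset (Finset V)) : Prop :=
  ∃ a b c d e : V,
    a ≠ b ∧ a ≠ c ∧ a ≠ d ∧ a ≠ e ∧ b ≠ c ∧ b ≠ d ∧ b ≠ e ∧ c ≠ d ∧ c ≠ e ∧ d ≠ e ∧
    ({a, b, c} : Finset V) ∈ H ∧ ({a, b, d} : Finset V) ∈ H ∧ ({c, d, e} : Finset V) ∈ H

/-- `H` contains a copy of `K₄³⁻ = {abc, abd, acd}`. -/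
def HasK43m (H : Finset (Finset V)) : Prop :=
  ∃ a b c d : V,
    a ≠ b ∧ a ≠ c ∧ a ≠ d ∧ b ≠ c ∧ b ≠ d ∧ c ≠ d ∧
    ({a, b, c} : Finset V) ∈ H ∧ ({a, b, d} : Finset V) ∈ H ∧ ({a, c, d} : Finset V) ∈ H

/-- `H` is 3-partite: the vertex set can be partitioned into three parts so that every
edge has at most one vertex in each part. -/
def Tripartite (H : Finset (Finset V)) : Prop :=
  ∃ P : V → Fin 3, ∀ e ∈ H, ∀ u ∈ e, ∀ v ∈ e, u ≠ v → P u ≠ P v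

/-- The shadow graph `∂H` of the 3-graph `H`: two distinct vertices are adjacent iff
they lie in a common edge of `H`. -/
def shadowG (H : Finset (Finset V)) : SimpleGraph V where
  Adj u v := u ≠ v ∧ ∃ e ∈ H, u ∈ e ∧ v ∈ e
  symm := by
    constructor
    rintro u v ⟨hne, e, he, hu, hv⟩
    exact ⟨hne.symm, e, he, hv, hu⟩
  loopless := by constructor; rintro u ⟨hne, -⟩; exact hne rfl

end Defs

/-- The blowup `W₅³[n/3, 2n/15, …, 2n/15]` of the 3-uniform 5-wheel: the center `u` is
replaced by `Fin (n/3)`, the rim vertex `vᵢ` by `{i} × Fin (2n/15)`, and every edge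
`u vᵢ v_{i+1}` by the corresponding complete 3-partite 3-graph (indices mod 5). -/
def wheelBlowup (n : ℕ) : Finset (Finset (Fin (n / 3) ⊕ Fin 5 × Fin (2 * n / 15))) :=
  Finset.univ.image fun p : Fin (n / 3) × Fin 5 × Fin (2 * n / 15) × Fin (2 * n / 15) =>
    ({Sum.inl p.1, Sum.inr (p.2.1, p.2.2.1), Sum.inr (p.2.1 + 1, p.2.2.2)} :
      Finset (Fin (n / 3) ⊕ Fin 5 × Fin (2 * n / 15)))

/-!
Vertices in a common edge of the blowup lie in distinct classes that are adjacent in the shadow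
of `W₅³`, the wheel graph `K₁ + C₅`. The shadows of `K₄³⁻` and of `F₅` both contain a `K₄`, which
would map to a `K₄` of the wheel graph; there is none, as `C₅` is triangle-free. Conversely the
blowup contains a copy of `W₅³`, so a 3-partition would properly 3-colour the wheel graph,
impossible as `C₅` is an odd cycle. Counting gives the degrees `5 (2n/15)²` on the centre class
and `2 (n/3) (2n/15)` on the rim classes, both equal to `4n²/45`.
-/

theorem SimpleGraph.CliqueFree.of_hom {V W : Type*} {G : SimpleGraph V} {G' : SimpleGraph W}
    {n : ℕ} (f : G →g G') (h : G'.CliqueFree n) : G.CliqueFree n := by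
  by_contra hG
  obtain ⟨c⟩ := (SimpleGraph.not_cliqueFree_iff_top_isContained n).1 hG
  exact (SimpleGraph.not_cliqueFree_iff_top_isContained n).2
    ⟨(f.comp c.toHom).toCopy (SimpleGraph.Hom.injective_of_top_hom _)⟩ h

theorem SimpleGraph.not_cliqueFree_four_of_adj {V : Type*} [DecidableEq V] {G : SimpleGraph V}
    {a b c d : V} (hab : G.Adj a b) (hac : G.Adj a c) (had : G.Adj a d) (hbc : G.Adj b c)
    (hbd : G.Adj b d) (hcd : G.Adj c d) : ¬ G.CliqueFree 4 := fun h =>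
  h {d, a, b, c} <| (SimpleGraph.is3Clique_triple_iff.2 ⟨hab, hac, hbc⟩).insert <| by
    simpa using ⟨had.symm, hbd.symm, hcd.symm⟩

section ThreeGraph

variable {V : Type*} {H : Finset (Finset V)}

theorem Tripartite.colorable_shadowG (h : Tripartite H) : (shadowG H).Colorable 3 := by
  obtain ⟨P, hP⟩ := h
  exact ⟨SimpleGraph.Coloring.mk P fun ⟨huv, e, he, hu, hv⟩ => hP e he _ hu _ hv huv⟩

variable [DecidableEq V]

theorem HasK43m.not_cliqueFree_shadowG (h : HasK43m H) : ¬ (shadowG H).CliqueFree 4 := by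
  obtain ⟨a, b, c, d, hab, hac, had, hbc, hbd, hcd, habc, habd, hacd⟩ := h
  exact SimpleGraph.not_cliqueFree_four_of_adj ⟨hab, _, habc, by simp, by simp⟩
    ⟨hac, _, habc, by simp, by simp⟩ ⟨had, _, habd, by simp, by simp⟩
    ⟨hbc, _, habc, by simp, by simp⟩ ⟨hbd, _, habd, by simp, by simp⟩
    ⟨hcd, _, hacd, by simp, by simp⟩

theorem HasF5.not_cliqueFree_shadowG (h : HasF5 H) : ¬ (shadowG H).CliqueFree 4 := by
  obtain ⟨a, b, c, d, e, hab, hac, had, -, hbc, hbd, -, hcd, -, -, habc, habd, hcde⟩ := h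
  exact SimpleGraph.not_cliqueFree_four_of_adj ⟨hab, _, habc, by simp, by simp⟩
    ⟨hac, _, habc, by simp, by simp⟩ ⟨had, _, habd, by simp, by simp⟩
    ⟨hbc, _, habc, by simp, by simp⟩ ⟨hbd, _, habd, by simp, by simp⟩
    ⟨hcd, _, hcde, by simp, by simp⟩

end ThreeGraph

-- `none` is the centre `u` and `some i` the rim vertex `vᵢ`.
def wheelGraph : SimpleGraph (Option (Fin 5)) :=
  SimpleGraph.fromRel fun x y => x = none ∨ ∃ i, x = some i ∧ y = some (i + 1)

instance : DecidableRel wheelGraph.Adj :=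
  inferInstanceAs (DecidableRel (SimpleGraph.fromRel _).Adj)

theorem wheelGraph_adj_none (i : Fin 5) : wheelGraph.Adj none (some i) := by
  simp [wheelGraph]

theorem wheelGraph_adj_add_one (i : Fin 5) : wheelGraph.Adj (some i) (some (i + 1)) := by
  revert i; decide

theorem wheelGraph.exists_mem_of_adj {x y : Option (Fin 5)} (h : wheelGraph.Adj x y) :
    ∃ i, x ∈ ({none, some i, some (i + 1)} : Finset _) ∧
      y ∈ ({none, some i, some (i + 1)} : Finset _) := by
  revert x y; decide

theorem wheelGraph_cliqueFree_four : wheelGraph.CliqueFree 4 := by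
  unfold SimpleGraph.CliqueFree; decide

set_option maxRecDepth 10000 in
theorem wheelGraph_not_colorable_three : ¬ wheelGraph.Colorable 3 := by
  rintro ⟨C⟩
  have : ∀ f : Option (Fin 5) → Fin 3, ∃ x y, wheelGraph.Adj x y ∧ f x = f y := by decide
  obtain ⟨x, y, hxy, hC⟩ := this C
  exact C.valid hxy hC

section Blowup

variable {α β : Type*} [DecidableEq α] [DecidableEq β]

def wheelEdge (p : α × Fin 5 × β × β) : Finset (α ⊕ Fin 5 × β) :=
  {Sum.inl p.1, Sum.inr (p.2.1, p.2.2.1), Sum.inr (p.2.1 + 1, p.2.2.2)}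

theorem card_wheelEdge (p : α × Fin 5 × β × β) : #(wheelEdge p) = 3 := by
  have hi : p.2.1 ≠ p.2.1 + 1 := by omega
  rw [wheelEdge, card_insert_of_notMem (by simp), card_pair (by simp [hi])]

theorem wheelEdge_injective : Function.Injective (wheelEdge (α := α) (β := β)) := by
  rintro ⟨a, i, x, y⟩ ⟨a', i', x', y'⟩ h
  have ha : Sum.inl a ∈ wheelEdge (a', i', x', y') := h ▸ by simp [wheelEdge]
  have hx : Sum.inr (i, x) ∈ wheelEdge (a', i', x', y') := h ▸ by simp [wheelEdge]
  have hy : Sum.inr (i + 1, y) ∈ wheelEdge (a', i', x', y') := h ▸ by simp [wheelEdge]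
  simp only [wheelEdge, mem_insert, mem_singleton, Sum.inl.injEq, Sum.inr.injEq, reduceCtorEq,
    Prod.mk.injEq, or_false, false_or] at ha hx hy
  subst ha
  rcases hx with ⟨rfl, rfl⟩ | ⟨hi, -⟩ <;> rcases hy with ⟨hi', -⟩ | ⟨hi', rfl⟩
  all_goals first | rfl | omega

variable [Fintype α] [Fintype β]

def wheelBlowupOn (α β : Type*) [DecidableEq α] [DecidableEq β] [Fintype α] [Fintype β] :
    Finset (Finset (α ⊕ Fin 5 × β)) :=
  univ.image wheelEdge

theorem wheelBlowup_eq_wheelBlowupOn (n : ℕ) :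
    wheelBlowup n = wheelBlowupOn (Fin (n / 3)) (Fin (2 * n / 15)) := rfl

def projWheelGraph : shadowG (wheelBlowupOn α β) →g wheelGraph where
  toFun := Sum.elim (fun _ => none) (fun p => some p.1)
  map_rel' := by
    rintro u v ⟨huv, e, he, hu, hv⟩
    obtain ⟨⟨a, i, x, y⟩, -, rfl⟩ := mem_image.1 he
    simp only [wheelEdge, mem_insert, mem_singleton] at hu hv
    rcases hu with rfl | rfl | rfl <;> rcases hv with rfl | rfl | rfl
    all_goals first
      | exact absurd rfl huv
      | exact wheelGraph_adj_none _
      | exact (wheelGraph_adj_none _).symm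
      | exact wheelGraph_adj_add_one _
      | exact (wheelGraph_adj_add_one _).symm

def wheelGraphToShadow (a : α) (b : β) : wheelGraph →g shadowG (wheelBlowupOn α β) where
  toFun x := x.elim (Sum.inl a) fun i => Sum.inr (i, b)
  map_rel' {x y} hxy := by
    have hinj : Function.Injective
        fun x : Option (Fin 5) => x.elim (Sum.inl a) fun i => Sum.inr (i, b) := by
      rintro (_ | i) (_ | j) h <;> simp_all
    obtain ⟨i, hx, hy⟩ := wheelGraph.exists_mem_of_adj hxy
    have hmem : ∀ z ∈ ({none, some i, some (i + 1)} : Finset _),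
        z.elim (Sum.inl a) (fun i => Sum.inr (i, b)) ∈ wheelEdge (a, i, b, b) := by
      simp [wheelEdge]
    exact ⟨hinj.ne hxy.ne, _, mem_image_of_mem _ (mem_univ _), hmem x hx, hmem y hy⟩

theorem shadowG_wheelBlowupOn_cliqueFree_four : (shadowG (wheelBlowupOn α β)).CliqueFree 4 :=
  wheelGraph_cliqueFree_four.of_hom projWheelGraph

theorem wheelBlowupOn_not_tripartite [Nonempty α] [Nonempty β] :
    ¬ Tripartite (wheelBlowupOn α β) := fun h =>
  wheelGraph_not_colorable_three <| h.colorable_shadowG.of_hom <|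
    wheelGraphToShadow (Classical.arbitrary α) (Classical.arbitrary β)

theorem degH_wheelBlowupOn (v : α ⊕ Fin 5 × β) :
    degH (wheelBlowupOn α β) v = #{p | v ∈ wheelEdge p} := by
  rw [degH, wheelBlowupOn, filter_image, card_image_of_injective _ wheelEdge_injective]

theorem degH_wheelBlowupOn_inl (a : α) :
    degH (wheelBlowupOn α β) (Sum.inl a) = 5 * Fintype.card β * Fintype.card β := by
  have hstar :
      ({p | Sum.inl a ∈ wheelEdge p} : Finset (α × Fin 5 × β × β)) = {a} ×ˢ univ := by
    ext ⟨a', i, x, y⟩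
    simp [wheelEdge]
  rw [degH_wheelBlowupOn, hstar]
  simp only [card_product, card_univ, card_singleton, Fintype.card_prod, Fintype.card_fin]
  ring

theorem degH_wheelBlowupOn_inr (j : Fin 5) (z : β) :
    degH (wheelBlowupOn α β) (Sum.inr (j, z)) = 2 * Fintype.card α * Fintype.card β := by
  have hsplit : ({p | Sum.inr (j, z) ∈ wheelEdge p} : Finset (α × Fin 5 × β × β)) =
      (univ ×ˢ {j} ×ˢ {z} ×ˢ univ) ∪ (univ ×ˢ {j - 1} ×ˢ univ ×ˢ {z}) := by
    ext ⟨a, i, x, y⟩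
    simp [wheelEdge, eq_sub_iff_add_eq, eq_comm]
    tauto
  have hdisj : Disjoint (univ ×ˢ {j} ×ˢ {z} ×ˢ univ : Finset (α × Fin 5 × β × β))
      (univ ×ˢ {j - 1} ×ˢ univ ×ˢ {z}) := by
    simp only [disjoint_left, mem_product, mem_singleton]
    omega
  rw [degH_wheelBlowupOn, hsplit, card_union_of_disjoint hdisj]
  simp only [card_product, card_univ, card_singleton]
  ring

end Blowup

/-- For `n ≡ 0 (mod 15)`, the blowup `W₅³[n/3, 2n/15, …, 2n/15]` is an `n`-vertex
3-graph which is `{K₄³⁻, F₅}`-free, has minimum degree exactly `4n²/45`, and is not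
3-partite. -/
theorem wheel_blowup_extremal (n : ℕ) (hn : 0 < n) (h15 : n % 15 = 0) :
    Fintype.card (Fin (n / 3) ⊕ Fin 5 × Fin (2 * n / 15)) = n ∧
    (∀ e ∈ wheelBlowup n, e.card = 3) ∧
    ¬ HasK43m (wheelBlowup n) ∧
    ¬ HasF5 (wheelBlowup n) ∧
    (∀ v, 4 * (n : ℝ) ^ 2 / 45 ≤ (degH (wheelBlowup n) v : ℝ)) ∧
    (∃ v, (degH (wheelBlowup n) v : ℝ) = 4 * (n : ℝ) ^ 2 / 45) ∧
    ¬ Tripartite (wheelBlowup n) := by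
  obtain ⟨m, rfl⟩ : 15 ∣ n := Nat.dvd_of_mod_eq_zero h15
  have hα : 15 * m / 3 = 5 * m := by omega
  have hβ : 2 * (15 * m) / 15 = 2 * m := by omega
  have : Nonempty (Fin (15 * m / 3)) := ⟨⟨0, by omega⟩⟩
  have : Nonempty (Fin (2 * (15 * m) / 15)) := ⟨⟨0, by omega⟩⟩
  have hdeg :
      ∀ v, (degH (wheelBlowup (15 * m)) v : ℝ) = 4 * ((15 * m : ℕ) : ℝ) ^ 2 / 45 := by
    rintro (a | ⟨j, z⟩)
    all_goals
      simp only [wheelBlowup_eq_wheelBlowupOn, degH_wheelBlowupOn_inl, degH_wheelBlowupOn_inr,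
        Fintype.card_fin, hα, hβ]
      push_cast
      ring
  rw [wheelBlowup_eq_wheelBlowupOn] at hdeg ⊢
  refine ⟨?_, fun e he => ?_,
    fun h => h.not_cliqueFree_shadowG shadowG_wheelBlowupOn_cliqueFree_four,
    fun h => h.not_cliqueFree_shadowG shadowG_wheelBlowupOn_cliqueFree_four,
    fun v => (hdeg v).ge, ⟨Sum.inl (Classical.arbitrary _), hdeg _⟩,
    wheelBlowupOn_not_tripartite⟩
  · simp only [Fintype.card_sum, Fintype.card_prod, Fintype.card_fin]
    omega
  · obtain ⟨p, -, rfl⟩ := mem_image.1 he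
    exact card_wheelEdge p
end

section
/- Let α, β, δ, γ > 0 be real numbers satisfying: β > 1/2; δ > max{ β(1−β)/3 + γα, (1−γ)²/12 + γα, 1/12 }; and δ > (1/2)·max{ (2−2β)²/4 + (2β−1)γ, β²/4 + (1−β)γ }. Let H be an n-vertex {K4^{3-}, F5}-free 3-graph with independence number α(H) ≤ αn and minimum degree δ(H) > δn², and suppose H contains three pairwise disjoint independent sets U1, U2, U3 ⊆ V(H) such that |Ui| + |Uj| > βn for every pair i < j from {1,2,3}, and |U1| + |U2| + |U3| > (1−γ)n. Then H is 3-partite. -/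
open Finset

/-- A set `I` is independent in the 3-graph `H` if every edge meets it in at most one
vertex. -/
def IsIndep {V : Type*} [DecidableEq V] (H : Finset (Finset V)) (I : Finset V) : Prop :=
  ∀ e ∈ H, (e ∩ I).card ≤ 1

/-!
Freeness from `K₄³⁻` and `F₅` says exactly that two vertices sharing a link pair are not
adjacent in the shadow. Hence adjacent vertices have disjoint links, and for fixed `v` and `t`
the vertices `x` with `{t, x}` in the link of `v` form an independent set, so at most `αn` link
pairs of `v` contain any given vertex.

Colour every vertex by a part `Uᵢ` in which it has no shadow neighbour. Such a part exists: if
`w` were adjacent to `x ∈ U₁`, `y ∈ U₂`, `z ∈ U₃`, the link pairs of `w, x, y, z` inside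
`U = U₁ ∪ U₂ ∪ U₃` would be pairwise distinct and each would meet two different parts, so the
four degrees would sum to at most `|U₁||U₂| + |U₁||U₃| + |U₂||U₃| + 4γαn² < 4δn²`. The colouring is
proper: two adjacent vertices without neighbours in `Uᵢ` have disjoint links whose union is a
triangle-free graph on `V ∖ Uᵢ`, so by Mantel their degrees sum to at most
`(n - |Uᵢ|)² / 4 < 2δn²`.
-/

section Proof

variable {V : Type*}

namespace Finset

theorem disjoint_powersetCard_of_disjoint {k : ℕ} (hk : k ≠ 0) {A B : Finset V}
    (hAB : Disjoint A B) : Disjoint (A.powersetCard k) (B.powersetCard k) := by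
  refine disjoint_left.2 fun s hA hB => ?_
  obtain ⟨hsA, hs⟩ := mem_powersetCard.1 hA
  obtain ⟨x, hx⟩ := card_pos.1 (hs ▸ Nat.pos_of_ne_zero hk)
  exact disjoint_left.1 hAB (hsA hx) ((mem_powersetCard.1 hB).1 hx)

variable [DecidableEq V]

theorem card_le_mul_add_mul_add_mul {A B C : Finset V} (hAB : Disjoint A B)
    (hAC : Disjoint A C) (hBC : Disjoint B C) {F : Finset (Finset V)}
    (hF : F ⊆ (A ∪ B ∪ C).powersetCard 2) (hFABC : ∀ s ∈ F, ¬ s ⊆ A ∧ ¬ s ⊆ B ∧ ¬ s ⊆ C) :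
    (#F : ℝ) ≤ #A * #B + #A * #C + #B * #C := by
  set Y := A.powersetCard 2 ∪ B.powersetCard 2 ∪ C.powersetCard 2
  have hYdisj : Disjoint (A.powersetCard 2 ∪ B.powersetCard 2) (C.powersetCard 2) :=
    disjoint_union_left.2 ⟨disjoint_powersetCard_of_disjoint two_ne_zero hAC, disjoint_powersetCard_of_disjoint two_ne_zero hBC⟩
  have hFY : Disjoint F Y := by
    refine disjoint_left.2 fun s hsF hsY => ?_
    obtain ⟨hA, hB, hC⟩ := hFABC s hsF
    simp only [Y, mem_union, mem_powersetCard] at hsY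
    tauto
  have hsub : F ∪ Y ⊆ (A ∪ B ∪ C).powersetCard 2 :=
    union_subset hF <| union_subset (union_subset (powersetCard_mono (by grind))
      (powersetCard_mono (by grind))) (powersetCard_mono (by grind))
  have hcard := card_le_card hsub
  rw [card_union_of_disjoint hFY, card_union_of_disjoint hYdisj,
    card_union_of_disjoint (disjoint_powersetCard_of_disjoint two_ne_zero hAB), card_powersetCard, card_powersetCard,
    card_powersetCard, card_powersetCard, card_union_of_disjoint (disjoint_union_left.2 ⟨hAC, hBC⟩),
    card_union_of_disjoint hAB] at hcard
  have hcardR : (#F : ℝ) + ((#A).choose 2 + (#B).choose 2 + (#C).choose 2 : ℕ)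
      ≤ ((#A + #B + #C).choose 2 : ℕ) := by exact_mod_cast hcard
  simp only [Nat.cast_choose_two, Nat.cast_add] at hcardR
  linarith

open Classical in
theorem four_mul_card_le_sq_of_triangleFree (M : Finset (Finset V)) (T : Finset V)
    (hMT : M ⊆ T.powersetCard 2)
    (htri : ∀ x y z, {x, y} ∈ M → {x, z} ∈ M → {y, z} ∈ M → False) : 4 * #M ≤ #T ^ 2 := by
  have hne {x y : V} (h : {x, y} ∈ M) : x ≠ y := by
    rintro rfl
    simpa using (mem_powersetCard.1 (hMT h)).2
  let G : SimpleGraph T :=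
    { Adj x y := {x.1, y.1} ∈ M
      symm := ⟨fun x y h => by rwa [pair_comm]⟩
      loopless := ⟨fun x h => hne h rfl⟩ }
  have hG : G.CliqueFree 3 := by
    rintro _ h
    obtain ⟨x, y, z, hxy, hxz, hyz, -⟩ := SimpleGraph.is3Clique_iff.1 h
    exact htri x y z hxy hxz hyz
  have hcard : #M ≤ #G.edgeFinset := by
    let f : Sym2 T → Finset V := Sym2.lift ⟨fun x y => {x.1, y.1}, fun x y => pair_comm _ _⟩
    refine card_le_card_of_surjOn f fun s hs => ?_
    obtain ⟨hsT, hs2⟩ := mem_powersetCard.1 (hMT hs)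
    obtain ⟨x, y, -, rfl⟩ := card_eq_two.1 hs2
    exact ⟨s(⟨x, hsT (by simp)⟩, ⟨y, hsT (by simp)⟩), by simpa [G] using hs, rfl⟩
  have hturan := hG.card_edgeFinset_le (r := 2)
  simp only [Fintype.card_coe, Nat.choose_eq_zero_of_lt (Nat.mod_lt #T two_pos),
    add_zero] at hturan
  calc 4 * #M ≤ 4 * ((#T ^ 2 - (#T % 2) ^ 2) / (2 * 2)) := by omega
    _ ≤ #T ^ 2 - (#T % 2) ^ 2 := Nat.mul_div_le _ _
    _ ≤ #T ^ 2 := Nat.sub_le _ _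

end Finset

theorem tripartite_of_isIndepSet_cover {H : Finset (Finset V)} {S : Fin 3 → Set V}
    (hS : ∀ v, ∃ i, v ∈ S i) (hind : ∀ i, (shadowG H).IsIndepSet (S i)) : Tripartite H := by
  choose P hP using hS
  exact ⟨P, fun e he u hu v hv huv hPuv =>
    hind (P u) (hP u) (hPuv ▸ hP v) huv ⟨huv, e, he, hu, hv⟩⟩

variable [DecidableEq V] {H : Finset (Finset V)} {s A : Finset V} {v t x y : V}

def link (H : Finset (Finset V)) (v : V) : Finset (Finset V) :=
  {e ∈ H | v ∈ e}.image (·.erase v)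

def commonNonNeighbors (H : Finset (Finset V)) (A : Finset V) : Set V :=
  {v | ∀ u ∈ A, ¬ (shadowG H).Adj v u}

theorem card_link (H : Finset (Finset V)) (v : V) : #(link H v) = degH H v := by
  refine card_image_of_injOn fun e he f hf hef => ?_
  rw [← insert_erase (mem_filter.1 (mem_coe.1 he)).2,
    ← insert_erase (mem_filter.1 (mem_coe.1 hf)).2]
  exact congrArg (insert v) hef

theorem isIndep_iff_isIndepSet : IsIndep H s ↔ (shadowG H).IsIndepSet s := by
  constructor
  · rintro hs x hx y hy - ⟨hxy, e, he, hxe, hye⟩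
    have : #{x, y} ≤ #(e ∩ s) := card_le_card (by simp_all [insert_subset_iff])
    have := hs e he
    rw [card_pair hxy] at *
    omega
  · intro hs e he
    by_contra! h
    obtain ⟨x, hx, y, hy, hxy⟩ := one_lt_card.1 h
    rw [mem_inter] at hx hy
    exact hs hx.2 hy.2 hxy ⟨hxy, e, he, hx.1, hy.1⟩

section ThreeUniform

variable (h3 : ∀ e ∈ H, #e = 3)
include h3

theorem mem_link : s ∈ link H v ↔ #s = 2 ∧ v ∉ s ∧ insert v s ∈ H := by
  simp only [link, mem_image, mem_filter]
  constructor
  · rintro ⟨e, ⟨he, hv⟩, rfl⟩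
    rw [card_erase_of_mem hv, h3 e he, insert_erase hv]
    exact ⟨rfl, notMem_erase v e, he⟩
  · rintro ⟨-, hv, he⟩
    exact ⟨insert v s, ⟨he, mem_insert_self v s⟩, erase_insert hv⟩

theorem adj_of_mem_insert_of_mem_link (hs : s ∈ link H v) (hx : x ∈ insert v s)
    (hy : y ∈ insert v s) (hxy : x ≠ y) : (shadowG H).Adj x y :=
  ⟨hxy, insert v s, ((mem_link h3).1 hs).2.2, hx, hy⟩

theorem adj_of_mem_link (hs : s ∈ link H v) (hx : x ∈ s) : (shadowG H).Adj v x :=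
  adj_of_mem_insert_of_mem_link h3 hs (mem_insert_self v s) (mem_insert_of_mem hx)
    fun h => ((mem_link h3).1 hs).2.1 (h ▸ hx)

theorem adj_of_pair_mem_link (hs : {x, y} ∈ link H v) : (shadowG H).Adj x y := by
  have hxy : x ≠ y := fun h => by simpa [h] using ((mem_link h3).1 hs).1
  exact adj_of_mem_insert_of_mem_link h3 hs (by simp) (by simp) hxy

theorem IsIndep.disjoint_of_mem_link (hA : IsIndep H A) (hv : v ∈ A) (hs : s ∈ link H v) :
    Disjoint s A :=
  disjoint_left.2 fun _ hx hxA =>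
    isIndep_iff_isIndepSet.1 hA hv hxA (adj_of_mem_link h3 hs hx).ne (adj_of_mem_link h3 hs hx)

theorem IsIndep.not_subset_of_mem_link (hA : IsIndep H A) (hs : s ∈ link H v) : ¬ s ⊆ A := by
  intro hsA
  obtain ⟨x, hx, y, hy, hxy⟩ := one_lt_card.1 (((mem_link h3).1 hs).1 ▸ one_lt_two)
  exact isIndep_iff_isIndepSet.1 hA (hsA hx) (hsA hy) hxy
    (adj_of_mem_insert_of_mem_link h3 hs (mem_insert_of_mem hx) (mem_insert_of_mem hy) hxy)

-- A common pair would avoid `P` and `Q`, hence lie inside the independent set `R`.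
theorem disjoint_filter_link_subset {P Q R U : Finset V} {v' : V} (hP : IsIndep H P)
    (hQ : IsIndep H Q) (hR : IsIndep H R) (hv : v ∈ P) (hv' : v' ∈ Q) (hU : U ⊆ P ∪ Q ∪ R) :
    Disjoint {s ∈ link H v | s ⊆ U} {s ∈ link H v' | s ⊆ U} := by
  refine disjoint_left.2 fun s hs hs' => ?_
  obtain ⟨hs, hsU⟩ := mem_filter.1 hs
  refine hR.not_subset_of_mem_link h3 hs fun t ht => ?_
  have htP := disjoint_left.1 (hP.disjoint_of_mem_link h3 hv hs) ht
  have htQ := disjoint_left.1 (hQ.disjoint_of_mem_link h3 hv' (mem_filter.1 hs').1) ht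
  simpa [htP, htQ] using hU (hsU ht)

variable (hK : ¬ HasK43m H) (hF5 : ¬ HasF5 H)
include hK hF5

theorem not_adj_of_mem_link_of_mem_link {p q : V} (hp : s ∈ link H p) (hq : s ∈ link H q) :
    ¬ (shadowG H).Adj p q := by
  rintro ⟨hpq, e, he, hpe, hqe⟩
  obtain ⟨hs, hps, hpH⟩ := (mem_link h3).1 hp
  obtain ⟨-, hqs, hqH⟩ := (mem_link h3).1 hq
  obtain ⟨x, y, hxy, rfl⟩ := card_eq_two.1 hs
  obtain ⟨z, hze, hzpq⟩ := exists_mem_notMem_of_card_lt_card (s := {p, q}) (t := e)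
    (by rw [h3 e he, card_pair hpq]; omega)
  simp only [mem_insert, mem_singleton, not_or] at hps hqs hzpq
  have hpqz : {p, q, z} = e := eq_of_subset_of_card_le (by simp [insert_subset_iff, *])
    (by rw [h3 e he, card_eq_three.2 ⟨p, q, z, hpq, Ne.symm hzpq.1, Ne.symm hzpq.2, rfl⟩])
  by_cases hzx : z = x
  · subst hzx
    exact hK ⟨z, y, p, q, hxy, Ne.symm hps.1, Ne.symm hqs.1, Ne.symm hps.2, Ne.symm hqs.2, hpq,
      by convert hpH using 1; grind, by convert hqH using 1; grind,
      by convert he using 1; rw [← hpqz]; grind⟩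
  by_cases hzy : z = y
  · subst hzy
    exact hK ⟨z, x, p, q, Ne.symm hxy, Ne.symm hps.2, Ne.symm hqs.2, Ne.symm hps.1,
      Ne.symm hqs.1, hpq, by convert hpH using 1; grind, by convert hqH using 1; grind,
      by convert he using 1; rw [← hpqz]; grind⟩
  exact hF5 ⟨x, y, p, q, z, hxy, Ne.symm hps.1, Ne.symm hqs.1, Ne.symm hzx, Ne.symm hps.2,
    Ne.symm hqs.2, Ne.symm hzy, hpq, Ne.symm hzpq.1, Ne.symm hzpq.2,
    by convert hpH using 1; grind, by convert hqH using 1; grind, hpqz ▸ he⟩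

theorem disjoint_link_of_adj {p q : V} (hpq : (shadowG H).Adj p q) :
    Disjoint (link H p) (link H q) :=
  disjoint_left.2 fun _ hp hq => not_adj_of_mem_link_of_mem_link h3 hK hF5 hp hq hpq

theorem not_adj_of_pair_mem_link_of_pair_mem_link (hx : {t, x} ∈ link H v)
    (hy : {t, y} ∈ link H v) : ¬ (shadowG H).Adj x y := by
  have hvt := adj_of_mem_link h3 hx (mem_insert_self t {x})
  have hvx := adj_of_mem_link h3 hx (x := x) (by simp)
  have hvy := adj_of_mem_link h3 hy (x := y) (by simp)
  have htx := adj_of_pair_mem_link h3 hx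
  have hty := adj_of_pair_mem_link h3 hy
  have hlink {w} (hw : {t, w} ∈ link H v) (hvw : v ≠ w) (htw : t ≠ w) : {v, t} ∈ link H w := by
    refine (mem_link h3).2 ⟨card_pair hvt.ne, by simp [hvw.symm, htw.symm], ?_⟩
    convert ((mem_link h3).1 hw).2.2 using 1
    grind
  exact not_adj_of_mem_link_of_mem_link h3 hK hF5 (hlink hx hvx.ne htx.ne)
    (hlink hy hvy.ne hty.ne)

variable [Fintype V]

theorem card_filter_link_not_subset_le {a : ℝ} (hind : ∀ I, IsIndep H I → (#I : ℝ) ≤ a)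
    (D : Finset V) (v : V) : (#{s ∈ link H v | ¬ s ⊆ D} : ℝ) ≤ #Dᶜ * a := by
  let fiber (t : V) : Finset V := univ.filter fun x => {t, x} ∈ link H v
  have hcover : {s ∈ link H v | ¬ s ⊆ D}
      ⊆ Dᶜ.biUnion fun t => (fiber t).image fun x => ({t, x} : Finset V) := by
    intro s hs
    obtain ⟨hsv, hsD⟩ := mem_filter.1 hs
    obtain ⟨t, hts, htD⟩ := not_subset.1 hsD
    obtain ⟨x, hx⟩ := card_eq_one.1
      (by rw [card_erase_of_mem hts, ((mem_link h3).1 hsv).1] : #(s.erase t) = 1)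
    have hs : s = {t, x} := by rw [← hx, insert_erase hts]
    simp only [mem_biUnion, mem_compl, mem_image, mem_filter, mem_univ, true_and, fiber]
    exact ⟨t, htD, x, hs ▸ hsv, hs.symm⟩
  have hfiber (t : V) : (#((fiber t).image fun x => ({t, x} : Finset V)) : ℝ) ≤ a :=
    (Nat.cast_le.2 card_image_le).trans <| hind _ <| isIndep_iff_isIndepSet.2
      fun x hx y hy _ => not_adj_of_pair_mem_link_of_pair_mem_link h3 hK hF5
        (mem_filter.1 (mem_coe.1 hx)).2 (mem_filter.1 (mem_coe.1 hy)).2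
  calc (#{s ∈ link H v | ¬ s ⊆ D} : ℝ)
      ≤ #(Dᶜ.biUnion fun t => (fiber t).image fun x => ({t, x} : Finset V)) := by
        exact_mod_cast card_le_card hcover
    _ ≤ ∑ t ∈ Dᶜ, (#((fiber t).image fun x => ({t, x} : Finset V)) : ℝ) := by
        exact_mod_cast card_biUnion_le
    _ ≤ ∑ t ∈ Dᶜ, a := sum_le_sum fun t _ => hfiber t
    _ = #Dᶜ * a := by rw [sum_const, nsmul_eq_mul]

theorem degH_le_card_filter_link_subset_add {a : ℝ} (hind : ∀ I, IsIndep H I → (#I : ℝ) ≤ a)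
    (D : Finset V) (v : V) : (degH H v : ℝ) ≤ #{s ∈ link H v | s ⊆ D} + #Dᶜ * a := by
  rw [← card_link, ← card_filter_add_card_filter_not (· ⊆ D)]
  push_cast
  linarith [card_filter_link_not_subset_le h3 hK hF5 hind D v]

theorem four_mul_degH_add_degH_le {p q : V} (hpq : (shadowG H).Adj p q)
    (hpA : ∀ u ∈ A, ¬ (shadowG H).Adj p u) (hqA : ∀ u ∈ A, ¬ (shadowG H).Adj q u) :
    4 * (degH H p + degH H q) ≤ #Aᶜ ^ 2 := by
  set M := link H p ∪ link H q
  have hMA : M ⊆ Aᶜ.powersetCard 2 := by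
    intro s hs
    refine mem_powersetCard.2 ⟨fun x hx => mem_compl.2 fun hxA => ?_, ?_⟩
    · rcases mem_union.1 hs with hs | hs
      exacts [hpA x hxA (adj_of_mem_link h3 hs hx), hqA x hxA (adj_of_mem_link h3 hs hx)]
    · rcases mem_union.1 hs with hs | hs <;> exact ((mem_link h3).1 hs).1
  have hcherry {r x y z : V} (hxy : {x, y} ∈ link H r) (hxz : {x, z} ∈ link H r)
      (hyz : {y, z} ∈ M) : False := by
    refine not_adj_of_pair_mem_link_of_pair_mem_link h3 hK hF5 hxy hxz ?_
    rcases mem_union.1 hyz with h | h <;> exact adj_of_pair_mem_link h3 h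
  have htri (x y z : V) (hxy : {x, y} ∈ M) (hxz : {x, z} ∈ M) (hyz : {y, z} ∈ M) : False := by
    rcases mem_union.1 hxy with h1 | h1 <;> rcases mem_union.1 hxz with h2 | h2 <;>
      rcases mem_union.1 hyz with h3 | h3 <;>
      first
      | exact hcherry h1 h2 hyz
      | exact hcherry (pair_comm x y ▸ h1 :) h3 hxz
      | exact hcherry (pair_comm x z ▸ h2 :) (pair_comm y z ▸ h3 :) hxy
  rw [← card_link, ← card_link, ← card_union_of_disjoint (disjoint_link_of_adj h3 hK hF5 hpq)]
  exact four_mul_card_le_sq_of_triangleFree M Aᶜ hMA htri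

theorem degH_add_degH_add_degH_add_degH_le {a : ℝ} (hind : ∀ I, IsIndep H I → (#I : ℝ) ≤ a)
    {A B C : Finset V} (hAB : Disjoint A B) (hAC : Disjoint A C) (hBC : Disjoint B C)
    (hA : IsIndep H A) (hB : IsIndep H B) (hC : IsIndep H C) {w x y z : V}
    (hx : (shadowG H).Adj w x) (hy : (shadowG H).Adj w y) (hz : (shadowG H).Adj w z)
    (hxA : x ∈ A) (hyB : y ∈ B) (hzC : z ∈ C) :
    (degH H w + degH H x + degH H y + degH H z : ℝ)
      ≤ #A * #B + #A * #C + #B * #C + 4 * (#(A ∪ B ∪ C)ᶜ * a) := by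
  set U := A ∪ B ∪ C
  let L (v : V) : Finset (Finset V) := {s ∈ link H v | s ⊆ U}
  have hadj {v} (h : (shadowG H).Adj w v) : Disjoint (L w) (L v) :=
    disjoint_filter_filter (disjoint_link_of_adj h3 hK hF5 h)
  have hxy := disjoint_filter_link_subset h3 hA hB hC hxA hyB subset_rfl
  have hxz := disjoint_filter_link_subset h3 hA hC hB hxA hzC (U := U) (by grind)
  have hyz := disjoint_filter_link_subset h3 hB hC hA hyB hzC (U := U) (by grind)
  have hcard : #(L w ∪ L x ∪ L y ∪ L z) = #(L w) + #(L x) + #(L y) + #(L z) := by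
    rw [card_union_of_disjoint, card_union_of_disjoint, card_union_of_disjoint (hadj hx)]
    · exact disjoint_union_left.2 ⟨hadj hy, hxy⟩
    · exact disjoint_union_left.2 ⟨disjoint_union_left.2 ⟨hadj hz, hxz⟩, hyz⟩
  have hL {s} (hs : s ∈ L w ∪ L x ∪ L y ∪ L z) : ∃ v, s ∈ link H v ∧ s ⊆ U := by
    simp only [mem_union, L, mem_filter] at hs
    grind
  have hbound := card_le_mul_add_mul_add_mul hAB hAC hBC (F := L w ∪ L x ∪ L y ∪ L z)
    (fun s hs => by
      obtain ⟨v, hsv, hsU⟩ := hL hs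
      exact mem_powersetCard.2 ⟨hsU, ((mem_link h3).1 hsv).1⟩)
    (fun s hs => by
      obtain ⟨v, hsv, -⟩ := hL hs
      exact ⟨hA.not_subset_of_mem_link h3 hsv, hB.not_subset_of_mem_link h3 hsv,
        hC.not_subset_of_mem_link h3 hsv⟩)
  have hdeg (v : V) := degH_le_card_filter_link_subset_add h3 hK hF5 hind U v
  rw [hcard] at hbound
  push_cast at hbound
  linarith [hdeg w, hdeg x, hdeg y, hdeg z]

variable {n : ℕ} (hV : Fintype.card V = n) {δ : ℝ} (hδH : ∀ v, δ * (n : ℝ) ^ 2 < degH H v)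
include hV hδH

theorem isIndepSet_commonNonNeighbors {β : ℝ} (hβδ : (1 - β) ^ 2 < 2 * δ)
    (hA : (2 * β - 1) * n < #A) : (shadowG H).IsIndepSet (commonNonNeighbors H A) := by
  intro p hp q hq _ hpq
  have hdeg : (4 * (degH H p + degH H q) : ℝ) ≤ (n - #A) ^ 2 := by
    have hAc : (#Aᶜ : ℝ) = n - #A := by rw [card_compl, hV, Nat.cast_sub (hV ▸ card_le_univ A)]
    rw [← hAc]
    exact_mod_cast four_mul_degH_add_degH_le h3 hK hF5 hpq hp hq
  have hn : (0 : ℝ) < n := by exact_mod_cast hV ▸ Fintype.card_pos_iff.2 ⟨p⟩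
  have hAn : (#A : ℝ) ≤ n := by exact_mod_cast hV ▸ card_le_univ A
  have hsq : ((n : ℝ) - #A) ^ 2 ≤ (2 * (1 - β) * n) ^ 2 := by
    apply pow_le_pow_left₀ <;> linarith
  nlinarith [hδH p, hδH q, mul_lt_mul_of_pos_right hβδ (pow_pos hn 2)]

theorem mem_commonNonNeighbors_of_card_add_card_add_card {α γ : ℝ}
    (hind : ∀ I, IsIndep H I → (#I : ℝ) ≤ α * n) (hα : 1 / 6 < α)
    (hδ : (1 - γ) ^ 2 / 12 + γ * α < δ) {A B C : Finset V}
    (hAB : Disjoint A B) (hAC : Disjoint A C) (hBC : Disjoint B C)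
    (hA : IsIndep H A) (hB : IsIndep H B) (hC : IsIndep H C)
    (hsum : (1 - γ) * n < (#A + #B + #C : ℝ)) (w : V) :
    w ∈ commonNonNeighbors H A ∨ w ∈ commonNonNeighbors H B ∨ w ∈ commonNonNeighbors H C := by
  by_contra! h
  simp only [commonNonNeighbors, Set.mem_ofPred_eq, not_forall, not_not] at h
  obtain ⟨⟨x, hxA, hx⟩, ⟨y, hyB, hy⟩, ⟨z, hzC, hz⟩⟩ := h
  have hdeg := degH_add_degH_add_degH_add_degH_le h3 hK hF5 hind hAB hAC hBC hA hB hC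
    hx hy hz hxA hyB hzC
  have hU : #(A ∪ B ∪ C) = #A + #B + #C := by
    rw [card_union_of_disjoint (disjoint_union_left.2 ⟨hAC, hBC⟩), card_union_of_disjoint hAB]
  have hUn : #A + #B + #C ≤ n := hU ▸ hV ▸ card_le_univ _
  rw [card_compl, hV, hU] at hdeg
  push_cast [hUn] at hdeg
  have hn : (0 : ℝ) < n := by exact_mod_cast hV ▸ Fintype.card_pos_iff.2 ⟨w⟩
  have hSn : (#A + #B + #C : ℝ) ≤ n := by exact_mod_cast hUn
  set S : ℝ := #A + #B + #C
  have hpairs : (#A * #B + #A * #C + #B * #C : ℝ) ≤ S ^ 2 / 3 := by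
    nlinarith [sq_nonneg ((#A : ℝ) - #B), sq_nonneg ((#A : ℝ) - #C), sq_nonneg ((#B : ℝ) - #C)]
  -- `S ↦ S² / 3 + 4αn(n - S)` is decreasing on `[0, n]` because `α > 1/6`
  have hmono : S ^ 2 / 3 + 4 * ((n - S) * (α * n))
      ≤ ((1 - γ) * n) ^ 2 / 3 + 4 * ((γ * n) * (α * n)) := by
    nlinarith [mul_nonneg (sub_nonneg.2 hsum.le)
      (by nlinarith : (0 : ℝ) ≤ 4 * α * n - (S + (1 - γ) * n) / 3)]
  nlinarith [hδH w, hδH x, hδH y, hδH z, mul_lt_mul_of_pos_right hδ (pow_pos hn 2)]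

end ThreeUniform

end Proof

theorem tripartite_from_three_indep_sets_general
    (α β δ γ : ℝ)
    (hβ : 1 / 2 < β)
    (hδ1 : max (max (β * (1 - β) / 3 + γ * α) ((1 - γ) ^ 2 / 12 + γ * α)) (1 / 12) < δ)
    (hδ2 : 1 / 2 * max ((2 - 2 * β) ^ 2 / 4 + (2 * β - 1) * γ) (β ^ 2 / 4 + (1 - β) * γ) < δ)
    (n : ℕ) (V : Type*) [Fintype V] [DecidableEq V] (hV : Fintype.card V = n)
    (H : Finset (Finset V)) (h3 : ∀ e ∈ H, e.card = 3)
    (hK : ¬ HasK43m H) (hF5 : ¬ HasF5 H)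
    (hind : ∀ I : Finset V, IsIndep H I → (I.card : ℝ) ≤ α * n)
    (hδH : ∀ v : V, δ * (n : ℝ) ^ 2 < (degH H v : ℝ))
    (U₁ U₂ U₃ : Finset V)
    (hd12 : Disjoint U₁ U₂) (hd13 : Disjoint U₁ U₃) (hd23 : Disjoint U₂ U₃)
    (hi1 : IsIndep H U₁) (hi2 : IsIndep H U₂) (hi3 : IsIndep H U₃)
    (hp12 : β * n < (U₁.card : ℝ) + U₂.card)
    (hp13 : β * n < (U₁.card : ℝ) + U₃.card)
    (hp23 : β * n < (U₂.card : ℝ) + U₃.card)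
    (hsum : (1 - γ) * n < (U₁.card : ℝ) + U₂.card + U₃.card) :
    Tripartite H := by
  have hUn : (#U₁ + #U₂ + #U₃ : ℝ) ≤ n := by
    have h := card_le_univ (U₁ ∪ U₂ ∪ U₃)
    rw [card_union_of_disjoint (disjoint_union_left.2 ⟨hd13, hd23⟩),
      card_union_of_disjoint hd12, hV] at h
    exact_mod_cast h
  have hγ : 0 < γ := by nlinarith
  have hα : 1 / 6 < α := by nlinarith [hind U₁ hi1, hind U₂ hi2]
  have hβδ : (1 - β) ^ 2 < 2 * δ := by
    nlinarith [le_max_left ((2 - 2 * β) ^ 2 / 4 + (2 * β - 1) * γ) (β ^ 2 / 4 + (1 - β) * γ)]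
  have hδ : (1 - γ) ^ 2 / 12 + γ * α < δ :=
    (le_max_right _ _).trans_lt ((le_max_left _ _).trans_lt hδ1)
  refine tripartite_of_isIndepSet_cover (S := ![commonNonNeighbors H U₁,
    commonNonNeighbors H U₂, commonNonNeighbors H U₃]) (fun v => ?_) (fun i => ?_)
  · rcases mem_commonNonNeighbors_of_card_add_card_add_card h3 hK hF5 hV hδH hind hα hδ
      hd12 hd13 hd23 hi1 hi2 hi3 hsum v with h | h | h
    exacts [⟨0, h⟩, ⟨1, h⟩, ⟨2, h⟩]
  · fin_cases i <;> exact isIndepSet_commonNonNeighbors h3 hK hF5 hV hδH hβδ (by linarith)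

/-- If a `{K₄³⁻, F₅}`-free 3-graph `H` with `α(H) ≤ αn` and `δ(H) > δn²` contains three
pairwise disjoint independent sets that are pairwise large and almost cover `V(H)`,
then `H` is 3-partite. -/
theorem tripartite_from_three_indep_sets
    (α β δ γ : ℝ) (hα : 0 < α) (hβ0 : 0 < β) (hδ0 : 0 < δ) (hγ : 0 < γ)
    (hβ : 1 / 2 < β)
    (hδ1 : max (max (β * (1 - β) / 3 + γ * α) ((1 - γ) ^ 2 / 12 + γ * α)) (1 / 12) < δ)
    (hδ2 : 1 / 2 * max ((2 - 2 * β) ^ 2 / 4 + (2 * β - 1) * γ) (β ^ 2 / 4 + (1 - β) * γ) < δ)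
    (n : ℕ) (V : Type*) [Fintype V] [DecidableEq V] (hV : Fintype.card V = n)
    (H : Finset (Finset V)) (h3 : ∀ e ∈ H, e.card = 3)
    (hK : ¬ HasK43m H) (hF5 : ¬ HasF5 H)
    (hind : ∀ I : Finset V, IsIndep H I → (I.card : ℝ) ≤ α * n)
    (hδH : ∀ v : V, δ * (n : ℝ) ^ 2 < (degH H v : ℝ))
    (U₁ U₂ U₃ : Finset V)
    (hd12 : Disjoint U₁ U₂) (hd13 : Disjoint U₁ U₃) (hd23 : Disjoint U₂ U₃)
    (hi1 : IsIndep H U₁) (hi2 : IsIndep H U₂) (hi3 : IsIndep H U₃)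
    (hp12 : β * n < (U₁.card : ℝ) + U₂.card)
    (hp13 : β * n < (U₁.card : ℝ) + U₃.card)
    (hp23 : β * n < (U₂.card : ℝ) + U₃.card)
    (hsum : (1 - γ) * n < (U₁.card : ℝ) + U₂.card + U₃.card) :
    Tripartite H :=
  tripartite_from_three_indep_sets_general α β δ γ hβ hδ1 hδ2 n V hV H h3 hK hF5 hind hδH U₁ U₂ U₃
    hd12 hd13 hd23 hi1 hi2 hi3 hp12 hp13 hp23 hsum
end

section
/- There is no point (x, y1, y2, y3, y4, y5) of positive real numbers with x + y1 + y2 + y3 + y4 + y5 = 1 satisfying simultaneously: y1y2 + y2y3 + y3y4 + y4y5 + y5y1 > 4/45, and x(y_{i−1} + y_{i+1}) > 4/45 for every i ∈ {1,...,5}, where indices are taken modulo 5. -/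
set_option maxHeartbeats 1000000 in
/-- There is no point `(x, y₁, …, y₅)` in the interior of the standard 5-dimensional
simplex with `y₁y₂ + y₂y₃ + y₃y₄ + y₄y₅ + y₅y₁ > 4/45` and
`x(y_{i-1} + y_{i+1}) > 4/45` for every `i ∈ {1, …, 5}` (indices mod 5). -/
theorem no_wheel_blowup_point :
    ¬ ∃ x y₁ y₂ y₃ y₄ y₅ : ℝ,
      0 < x ∧ 0 < y₁ ∧ 0 < y₂ ∧ 0 < y₃ ∧ 0 < y₄ ∧ 0 < y₅ ∧
      x + y₁ + y₂ + y₃ + y₄ + y₅ = 1 ∧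
      y₁ * y₂ + y₂ * y₃ + y₃ * y₄ + y₄ * y₅ + y₅ * y₁ > 4 / 45 ∧
      x * (y₅ + y₂) > 4 / 45 ∧
      x * (y₁ + y₃) > 4 / 45 ∧
      x * (y₂ + y₄) > 4 / 45 ∧
      x * (y₃ + y₅) > 4 / 45 ∧
      x * (y₄ + y₁) > 4 / 45 := by
  rintro ⟨x, y1, y2, y3, y4, y5, hx, h1, h2, h3, h4, h5, hs, hC, g1, g2, g3, g4, g5⟩
  -- eliminate y5
  have hy5 : y5 = 1 - x - y1 - y2 - y3 - y4 := by linarith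
  subst hy5
  -- x is in (1/3, 2/3)
  have hq : x * (1 - x) > 2 / 9 := by linarith [g1, g2, g3, g4, g5]
  have hxl : 1 / 3 < x := by nlinarith [hq]
  have hxu : x < 2 / 3 := by nlinarith [hq]
  -- each x * y_i < B := x*(1-x) - 8/45, using two disjoint constraint pairs avoiding i
  have b1 : x * (1 - x) - 8 / 45 - x * y1 > 0 := by linarith [g3, g4]
  have b2 : x * (1 - x) - 8 / 45 - x * y2 > 0 := by linarith [g4, g5]
  have b3 : x * (1 - x) - 8 / 45 - x * y3 > 0 := by linarith [g1, g5]
  have b4 : x * (1 - x) - 8 / 45 - x * y4 > 0 := by linarith [g1, g2]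
  have b5 : x * (1 - x) - 8 / 45 - x * (1 - x - y1 - y2 - y3 - y4) > 0 := by
    linarith [g2, g3]
  -- key products
  have k1 := mul_pos b1 (by linarith : x * ((1 - x - y1 - y2 - y3 - y4) + y2) - 4 / 45 > 0)
  have k2 := mul_pos b2 (by linarith : x * (y1 + y3) - 4 / 45 > 0)
  have k3 := mul_pos b3 (by linarith : x * (y2 + y4) - 4 / 45 > 0)
  have k4 := mul_pos b4 (by linarith : x * (y3 + (1 - x - y1 - y2 - y3 - y4)) - 4 / 45 > 0)
  have k5 := mul_pos b5 (by linarith : x * (y4 + y1) - 4 / 45 > 0)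
  -- 2 x^2 C > (8/45) x^2
  have hC2 : x * x * (y1 * y2 + y2 * y3 + y3 * y4 + y4 * (1 - x - y1 - y2 - y3 - y4)
      + (1 - x - y1 - y2 - y3 - y4) * y1 - 4 / 45) > 0 :=
    mul_pos (mul_pos hx hx) (by linarith)
  -- the cubic factor is negative on (1/3, 2/3)
  have hr : 135 * x ^ 3 - 225 * x ^ 2 + 96 * x - 16 < 0 := by
    nlinarith [mul_nonneg (by linarith : (0:ℝ) ≤ 3 * x - 1)
      (by nlinarith : (0:ℝ) ≤ 60 * x - 45 * x ^ 2 - 12)]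
  -- the quartic bound: p(x) ≤ 0
  have hp : (x * (1 - x) - 8 / 45) * (2 * x * (1 - x) - 20 / 45)
      + (4 / 45) * (x * (1 - x)) - (8 / 45) * x ^ 2 ≤ 0 := by
    nlinarith [mul_nonneg (by linarith : (0:ℝ) ≤ 3 * x - 1)
      (by linarith : (0:ℝ) ≤ 16 - 96 * x + 225 * x ^ 2 - 135 * x ^ 3)]
  nlinarith [k1, k2, k3, k4, k5, hC2, hp]
end

section
/- Let ε ∈ (0, 1/180] and let n ≥ 1/(7ε²) be an integer (so n > 4628). If H is an n-vertex F5-free 3-graph with minimum degree δ(H) > (1/12 + ε)n², then the shadow ∂H is K7-free: ∂H contains no complete subgraph on 7 vertices. -/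
open Finset

/-!
Sum the degrees over a 7-clique `s` of `∂H` by counting pairs `p` together with the vertices
`v ∈ s` for which `p ∪ {v} ∈ H`. If two vertices `u, v ∈ s` extend the same pair `p`, then any
edge `uvx` has `x ∈ p`, for otherwise `p ∪ {u}, p ∪ {v}, uvx` is a copy of `F₅`. Fixing one edge
`uvx` for each of the 42 ordered pairs of `s`, only the pairs through one of these at most 42
vertices `x` can extend by two or more vertices of `s`, so the degree sum is at most
`C(n,2) + 7 · 42 · (n - 1)`. Against the lower bound `7 (1/12 + ε) n²` this forces `n < 3528`,
while `ε ≤ 1/180` gives `n ≥ 32400/7`.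
-/

section F5Free

variable {V : Type*} [DecidableEq V] {H : Finset (Finset V)}

/-- The codegree of `p` in `H`, counting only the vertices of `s`. -/
def codegreeIn (H : Finset (Finset V)) (s p : Finset V) : ℕ :=
  #{v ∈ s | v ∉ p ∧ insert v p ∈ H}

theorem degH_eq_card_pairs [Fintype V] (h3 : ∀ e ∈ H, #e = 3) (v : V) :
    degH H v = #{p ∈ (univ : Finset V).powersetCard 2 | v ∉ p ∧ insert v p ∈ H} := by
  refine card_bij' (fun e _ => e.erase v) (fun p _ => insert v p) ?_ ?_ ?_ ?_
  · intro e he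
    obtain ⟨heH, hv⟩ := mem_filter.mp he
    refine mem_filter.mpr ⟨?_, notMem_erase v e, by rwa [insert_erase hv]⟩
    rw [mem_powersetCard_univ, card_erase_of_mem hv, h3 e heH]
  · intro p hp
    exact mem_filter.mpr ⟨(mem_filter.mp hp).2.2, mem_insert_self v p⟩
  · intro e he
    exact insert_erase (mem_filter.mp he).2
  · intro p hp
    exact erase_insert (mem_filter.mp hp).2.1

theorem sum_degH_eq_sum_codegreeIn [Fintype V] (h3 : ∀ e ∈ H, #e = 3) (s : Finset V) :
    ∑ v ∈ s, degH H v = ∑ p ∈ (univ : Finset V).powersetCard 2, codegreeIn H s p := by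
  simp only [degH_eq_card_pairs h3, codegreeIn, card_filter]
  exact sum_comm

theorem eq_or_eq_of_not_hasF5 (hF5 : ¬ HasF5 H) {a b u v x : V} (hab : a ≠ b)
    (hua : u ≠ a) (hub : u ≠ b) (hva : v ≠ a) (hvb : v ≠ b) (huv : u ≠ v)
    (hxu : x ≠ u) (hxv : x ≠ v)
    (hu : {a, b, u} ∈ H) (hv : {a, b, v} ∈ H) (he : {u, v, x} ∈ H) : x = a ∨ x = b := by
  by_contra! hx
  exact hF5 ⟨a, b, u, v, x, hab, hua.symm, hva.symm, hx.1.symm, hub.symm, hvb.symm, hx.2.symm,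
    huv, hxu.symm, hxv.symm, hu, hv, he⟩

theorem exists_of_one_lt_codegreeIn (hF5 : ¬ HasF5 H) {s p : Finset V} (hp : #p = 2)
    (h : 1 < codegreeIn H s p) :
    ∃ u ∈ s, ∃ v ∈ s, u ≠ v ∧ ∀ x, x ≠ u → x ≠ v → {u, v, x} ∈ H → x ∈ p := by
  obtain ⟨a, b, hab, rfl⟩ := card_eq_two.mp hp
  obtain ⟨u, hu, v, hv, huv⟩ := one_lt_card.mp h
  simp only [mem_filter, mem_insert, mem_singleton, not_or] at hu hv
  refine ⟨u, hu.1, v, hv.1, huv, fun x hxu hxv he => ?_⟩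
  have hcomm (w : V) : insert w {a, b} = ({a, b, w} : Finset V) := by
    ext; simp only [mem_insert, mem_singleton]; tauto
  rw [hcomm] at hu hv
  simpa using eq_or_eq_of_not_hasF5 hF5 hab hu.2.1.1 hu.2.1.2 hv.2.1.1 hv.2.1.2 huv hxu hxv
    hu.2.2 hv.2.2 he

theorem exists_third_of_shadowG_adj (h3 : ∀ e ∈ H, #e = 3) {u v : V}
    (huv : (shadowG H).Adj u v) : ∃ x, x ≠ u ∧ x ≠ v ∧ {u, v, x} ∈ H := by
  obtain ⟨huv, e, he, hu, hv⟩ := huv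
  obtain ⟨x, hx⟩ : (e \ {u, v}).Nonempty := by
    rw [← card_pos]
    have h1 := le_card_sdiff ({u, v} : Finset V) e
    have h2 := card_le_two (a := u) (b := v)
    rw [h3 e he] at h1
    omega
  simp only [mem_sdiff, mem_insert, mem_singleton, not_or] at hx
  refine ⟨x, hx.2.1, hx.2.2, ?_⟩
  have hsub : ({u, v, x} : Finset V) ⊆ e := by
    simp [insert_subset_iff, hu, hv, hx.1]
  have hcard : #({u, v, x} : Finset V) = 3 :=
    card_eq_three.mpr ⟨u, v, x, huv, Ne.symm hx.2.1, Ne.symm hx.2.2, rfl⟩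
  rwa [eq_of_subset_of_card_le hsub (by rw [h3 e he, hcard])]

theorem sum_le_card_add_mul_card_filter {α : Type*} {P : Finset α} {f : α → ℕ} {k : ℕ}
    (q : α → Prop) [DecidablePred q] (hk : ∀ p ∈ P, f p ≤ k) (h1 : ∀ p ∈ P, ¬ q p → f p ≤ 1) :
    ∑ p ∈ P, f p ≤ #P + k * #{p ∈ P | q p} := by
  calc ∑ p ∈ P, f p ≤ ∑ p ∈ P, (1 + if q p then k else 0) := by
        refine sum_le_sum fun p hp => ?_
        split_ifs with h
        · exact (hk p hp).trans (Nat.le_add_left k 1)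
        · exact h1 p hp h
    _ = #P + k * #{p ∈ P | q p} := by
        simp only [sum_add_distrib, sum_ite, sum_const_zero, add_zero, sum_const, smul_eq_mul]
        ring

theorem card_pairs_mem_le [Fintype V] (x : V) :
    #{p ∈ (univ : Finset V).powersetCard 2 | x ∈ p} ≤ Fintype.card V - 1 := by
  calc #{p ∈ (univ : Finset V).powersetCard 2 | x ∈ p}
      ≤ #((univ.erase x).image fun y => ({x, y} : Finset V)) := by
        refine card_le_card fun p hp => ?_
        obtain ⟨hp, hx⟩ := mem_filter.mp hp
        obtain ⟨a, b, hab, rfl⟩ := card_eq_two.mp (mem_powersetCard_univ.mp hp)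
        simp only [mem_image, mem_erase, mem_univ, and_true]
        rcases mem_insert.mp hx with rfl | hx
        · exact ⟨b, hab.symm, rfl⟩
        · obtain rfl := mem_singleton.mp hx
          exact ⟨a, hab, pair_comm _ _⟩
    _ ≤ Fintype.card V - 1 := by
        rw [← card_univ, ← card_erase_of_mem (mem_univ x)]
        exact card_image_le

theorem card_pairs_meeting_le [Fintype V] (W : Finset V) :
    #{p ∈ (univ : Finset V).powersetCard 2 | ∃ x ∈ W, x ∈ p} ≤ #W * (Fintype.card V - 1) := by
  calc #{p ∈ (univ : Finset V).powersetCard 2 | ∃ x ∈ W, x ∈ p}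
      ≤ #(W.biUnion fun x => {p ∈ (univ : Finset V).powersetCard 2 | x ∈ p}) := by
        refine card_le_card fun p hp => ?_
        obtain ⟨hp, x, hxW, hxp⟩ := mem_filter.mp hp
        exact mem_biUnion.mpr ⟨x, hxW, mem_filter.mpr ⟨hp, hxp⟩⟩
    _ ≤ ∑ x ∈ W, #{p ∈ (univ : Finset V).powersetCard 2 | x ∈ p} := card_biUnion_le
    _ ≤ #W * (Fintype.card V - 1) := sum_le_card_nsmul _ _ _ fun x _ => card_pairs_mem_le x

theorem sum_degH_le_of_isClique [Fintype V] (h3 : ∀ e ∈ H, #e = 3) (hF5 : ¬ HasF5 H)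
    {s : Finset V} (hs : (shadowG H).IsClique (s : Set V)) :
    ∑ v ∈ s, degH H v ≤ (Fintype.card V).choose 2 + #s * (#s.offDiag * (Fintype.card V - 1)) := by
  have hthird (u : V) (hu : u ∈ s) (v : V) (hv : v ∈ s) (huv : u ≠ v) :
      ∃ x, x ≠ u ∧ x ≠ v ∧ {u, v, x} ∈ H :=
    exists_third_of_shadowG_adj h3 (hs hu hv huv)
  choose! w hw using hthird
  set W := s.offDiag.image fun q => w q.1 q.2
  have hW (p : Finset V) (hp : p ∈ (univ : Finset V).powersetCard 2) (hpW : ¬ ∃ x ∈ W, x ∈ p) :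
      codegreeIn H s p ≤ 1 := by
    by_contra! h
    obtain ⟨u, hu, v, hv, huv, hmem⟩ :=
      exists_of_one_lt_codegreeIn hF5 (mem_powersetCard_univ.mp hp) h
    obtain ⟨hwu, hwv, hwH⟩ := hw u hu v hv huv
    exact hpW ⟨w u v, mem_image.mpr ⟨(u, v), mem_offDiag.mpr ⟨hu, hv, huv⟩, rfl⟩,
      hmem _ hwu hwv hwH⟩
  rw [sum_degH_eq_sum_codegreeIn h3]
  calc ∑ p ∈ (univ : Finset V).powersetCard 2, codegreeIn H s p
      ≤ #((univ : Finset V).powersetCard 2)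
          + #s * #{p ∈ (univ : Finset V).powersetCard 2 | ∃ x ∈ W, x ∈ p} :=
        sum_le_card_add_mul_card_filter _ (fun p _ => card_filter_le _ _) hW
    _ ≤ (Fintype.card V).choose 2 + #s * (#s.offDiag * (Fintype.card V - 1)) := by
        rw [card_powersetCard, card_univ]
        gcongr
        exact (card_pairs_meeting_le W).trans (Nat.mul_le_mul_right _ card_image_le)

end F5Free

/-- For `ε ∈ (0, 1/180]` and `n ≥ 1/(7ε²)`, every `n`-vertex `F₅`-free 3-graph with
minimum degree greater than `(1/12 + ε)n²` has a `K₇`-free shadow. -/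
theorem F5_shadow_K7_free (ε : ℝ) (hε0 : 0 < ε) (hε : ε ≤ 1 / 180)
    (n : ℕ) (hn : 1 / (7 * ε ^ 2) ≤ (n : ℝ))
    (V : Type*) [Fintype V] [DecidableEq V] (hV : Fintype.card V = n)
    (H : Finset (Finset V)) (h3 : ∀ e ∈ H, e.card = 3)
    (hF5 : ¬ HasF5 H)
    (hδ : ∀ v : V, (1 / 12 + ε) * (n : ℝ) ^ 2 < (degH H v : ℝ)) :
    (shadowG H).CliqueFree 7 := by
  rintro s ⟨hs, hcard⟩
  have hsum := sum_degH_le_of_isClique h3 hF5 hs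
  rw [offDiag_card, hcard, hV] at hsum
  have hlow : 7 * ((1 / 12 + ε) * (n : ℝ) ^ 2) < ∑ v ∈ s, (degH H v : ℝ) := by
    calc 7 * ((1 / 12 + ε) * (n : ℝ) ^ 2) = ∑ _v ∈ s, (1 / 12 + ε) * (n : ℝ) ^ 2 := by
          rw [sum_const, hcard, nsmul_eq_mul, Nat.cast_ofNat]
      _ < ∑ v ∈ s, (degH H v : ℝ) :=
          sum_lt_sum_of_nonempty (card_pos.mp (by omega)) fun v _ => hδ v
  have hup : ∑ v ∈ s, (degH H v : ℝ) ≤ (n : ℝ) * (n - 1) / 2 + 294 * n := by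
    have hsub : ((n - 1 : ℕ) : ℝ) ≤ n := by exact_mod_cast n.sub_le 1
    have := (Nat.cast_le (α := ℝ)).mpr hsum
    push_cast [Nat.cast_choose_two] at this
    linarith
  have hn_large : (32400 : ℝ) / 7 ≤ n := by
    refine le_trans ?_ hn
    rw [div_le_div_iff₀ (by norm_num) (by positivity)]
    nlinarith
  nlinarith
end
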